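/- arXiv:1409.4338 — 4 statements merged into one kernel-verified Lean document; each statement's English description precedes it below -/
import Mathlib

section
/- For a product state ρ^{A} ⊗ σ^{B} of normalized states, the conditional min-entropy satisfies H_min(A|B)_{ρ⊗σ} = H_min(A)_ρ = -log ‖ρ^A‖_∞, where ‖·‖_∞ denotes the operator norm (largest eigenvalue). -/
/-!
If `2^λ (1 ⊗ ω) ≥ ρ ⊗ σ`, evaluating the difference on the product vectors `v ⊗ eⱼ` and summing
over `j` gives `2^λ ‖v‖² tr ω ≥ ⟪v, ρ v⟫ tr σ`, i.e. `2^λ • 1 ≥ ρ`, i.e. `λ_max(ρ) ≤ 2^λ`.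
Conversely, if `λ_max(ρ) ≤ 2^λ` then `ω = σ` is feasible, since `(2^λ • 1 - ρ) ⊗ σ ≥ 0`.
So the feasible `λ` form the ray `[log₂ λ_max(ρ), ∞)`.
-/

open Matrix ComplexOrder Kronecker

/-- Conditional min-entropy `H_min(A|B)_ρ := - inf_σ D_max(ρ^{AB} ‖ I^A ⊗ σ^B)`, where the
infimum ranges over normalized states `σ` on `B` and
`D_max(ρ‖τ) := inf {λ ∈ ℝ : 2^λ τ ≥ ρ}` (Loewner order). -/
noncomputable def HminCond {a b : Type*} [Fintype a] [Fintype b] [DecidableEq a] [DecidableEq b]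
    (ρ : Matrix (a × b) (a × b) ℂ) : ℝ :=
  - sInf {lam : ℝ | ∃ σ : Matrix b b ℂ, σ.PosSemidef ∧ σ.trace = 1 ∧
      ((((2 : ℝ) ^ lam : ℝ) : ℂ) • ((1 : Matrix a a ℂ) ⊗ₖ σ) - ρ).PosSemidef}

namespace Matrix

theorem sub_kronecker {R l m n p : Type*} [NonUnitalNonAssocRing R] (A₁ A₂ : Matrix l m R)
    (B : Matrix n p R) : (A₁ - A₂) ⊗ₖ B = A₁ ⊗ₖ B - A₂ ⊗ₖ B :=
  ext fun _ _ => sub_mul _ _ _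

variable {𝕜 a b : Type*} [RCLike 𝕜] [Fintype a] [Fintype b]

theorem star_dotProduct_kronecker_mulVec {R : Type*} [CommSemiring R] [StarRing R]
    (A : Matrix a a R) (B : Matrix b b R) (v : a → R) (w : b → R) :
    star (fun p : a × b => v p.1 * w p.2) ⬝ᵥ ((A ⊗ₖ B) *ᵥ fun p : a × b => v p.1 * w p.2)
      = (star v ⬝ᵥ A *ᵥ v) * (star w ⬝ᵥ B *ᵥ w) := by
  simp only [dotProduct, mulVec, kroneckerMap_apply, Pi.star_apply, star_mul',
    Fintype.sum_prod_type, Fintype.sum_mul_sum]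
  refine Finset.sum_congr rfl fun i _ => Finset.sum_congr rfl fun j _ => ?_
  rw [mul_mul_mul_comm, Fintype.sum_mul_sum]
  congr 1
  exact Finset.sum_congr rfl fun k _ => Finset.sum_congr rfl fun l _ => by ring

theorem sum_star_single_dotProduct_mulVec_single [DecidableEq b] {R : Type*} [CommSemiring R]
    [StarRing R] (B : Matrix b b R) :
    ∑ j, star (Pi.single j 1 : b → R) ⬝ᵥ B *ᵥ Pi.single j 1 = B.trace := by
  simp [trace]

theorem PosSemidef.dotProduct_mulVec_mul_trace_le_of_kronecker [DecidableEq b]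
    {τ ρ : Matrix a a 𝕜} {ω σ : Matrix b b 𝕜}
    (h : (τ ⊗ₖ ω - ρ ⊗ₖ σ).PosSemidef) (v : a → 𝕜) :
    (star v ⬝ᵥ ρ *ᵥ v) * σ.trace ≤ (star v ⬝ᵥ τ *ᵥ v) * ω.trace := by
  have hj (j : b) :=
    h.dotProduct_mulVec_nonneg fun p : a × b => v p.1 * (Pi.single j 1 : b → 𝕜) p.2
  simp only [sub_mulVec, dotProduct_sub, star_dotProduct_kronecker_mulVec, sub_nonneg] at hj
  simpa only [← sum_star_single_dotProduct_mulVec_single, Finset.mul_sum] using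
    Finset.sum_le_sum fun j _ => hj j

theorem IsHermitian.posSemidef_smul_one_sub_iff [DecidableEq a] {A : Matrix a a 𝕜}
    (hA : A.IsHermitian) (c : ℝ) :
    ((c : 𝕜) • 1 - A).PosSemidef ↔ ∀ i, hA.eigenvalues i ≤ c := by
  open scoped MatrixOrder in
  rw [← le_iff, ← RCLike.real_smul_eq_coe_smul, ← Algebra.algebraMap_eq_smul_one,
    le_algebraMap_iff_spectrum_le hA.isSelfAdjoint, hA.spectrum_real_eq_range_eigenvalues,
    Set.forall_mem_range]

theorem exists_state_smul_one_kronecker_sub_posSemidef_iff [DecidableEq a] [DecidableEq b]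
    {ρ : Matrix a a 𝕜} (hρ : ρ.IsHermitian) {σ : Matrix b b 𝕜} (hσ : σ.PosSemidef)
    (hσ1 : σ.trace = 1) (c : ℝ) :
    (∃ ω : Matrix b b 𝕜, ω.PosSemidef ∧ ω.trace = 1 ∧
      ((c : 𝕜) • ((1 : Matrix a a 𝕜) ⊗ₖ ω) - ρ ⊗ₖ σ).PosSemidef) ↔
      ∀ i, hρ.eigenvalues i ≤ c := by
  rw [← hρ.posSemidef_smul_one_sub_iff]
  constructor
  · rintro ⟨ω, -, hω1, h⟩
    rw [← smul_kronecker] at h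
    have hherm : ((c : 𝕜) • (1 : Matrix a a 𝕜) - ρ).IsHermitian :=
      .sub (by simp [IsHermitian, conjTranspose_smul]) hρ
    refine .of_dotProduct_mulVec_nonneg hherm fun v => ?_
    have := h.dotProduct_mulVec_mul_trace_le_of_kronecker v
    rw [hσ1, hω1, mul_one, mul_one] at this
    simpa [sub_mulVec, dotProduct_sub, smul_mulVec, sub_nonneg] using this
  · intro h
    refine ⟨σ, hσ, hσ1, ?_⟩
    rw [← smul_kronecker, ← sub_kronecker]
    exact h.kronecker hσ

theorem IsHermitian.iSup_eigenvalues_pos [DecidableEq a] {A : Matrix a a 𝕜} (hA : A.IsHermitian)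
    (h : 0 < RCLike.re A.trace) : 0 < ⨆ i, hA.eigenvalues i := by
  rw [hA.trace_eq_sum_eigenvalues] at h
  simp only [map_sum, RCLike.ofReal_re] at h
  obtain ⟨i, -, hi⟩ := Finset.exists_lt_of_sum_lt (f := 0) (g := hA.eigenvalues)
    (by simpa using h)
  exact hi.trans_le (le_ciSup (Set.finite_range _).bddAbove i)

end Matrix

/-- For a product state `ρ^A ⊗ σ^B`, the conditional min-entropy equals the (unconditional)
min-entropy `H_min(A)_ρ = - log ‖ρ^A‖_∞`, minus log of the largest eigenvalue of `ρ^A`. -/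
theorem HminCond_kronecker {a b : Type*} [Fintype a] [Fintype b] [DecidableEq a] [DecidableEq b]
    (ρ : Matrix a a ℂ) (σ : Matrix b b ℂ)
    (hρ : ρ.PosSemidef) (hρ1 : ρ.trace = 1) (hσ : σ.PosSemidef) (hσ1 : σ.trace = 1) :
    HminCond (ρ ⊗ₖ σ) = - Real.logb 2 (⨆ i, hρ.1.eigenvalues i) := by
  have hpos := hρ.1.iSup_eigenvalues_pos (by simp [hρ1])
  have : Nonempty a := not_isEmpty_iff.mp fun _ => by simp [trace] at hρ1
  have hS : {lam : ℝ | ∃ ω : Matrix b b ℂ, ω.PosSemidef ∧ ω.trace = 1 ∧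
      ((((2 : ℝ) ^ lam : ℝ) : ℂ) • ((1 : Matrix a a ℂ) ⊗ₖ ω) - ρ ⊗ₖ σ).PosSemidef} =
      Set.Ici (Real.logb 2 (⨆ i, hρ.1.eigenvalues i)) := by
    ext lam
    refine (exists_state_smul_one_kronecker_sub_posSemidef_iff hρ.1 hσ hσ1 _).trans ?_
    rw [← ciSup_le_iff (Set.finite_range _).bddAbove, Set.mem_Ici,
      Real.logb_le_iff_le_rpow one_lt_two hpos]
    exact Iff.rfl
  rw [HminCond, hS, csInf_Ici]
end

section
/- Unlockability of conditional min-entropy (non-smooth case): for any normalized state ρ^{ABC} on A ⊗ B ⊗ C, H_min(A|B)_ρ ≤ H_min(A|BC)_ρ + 2 log|C|. -/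
open Matrix ComplexOrder Kronecker

/-- The marginal `ρ^{AB}` of a state on `A ⊗ (B ⊗ C)`, obtained by partial trace over `C`. -/
noncomputable def margAB {a b c : Type*} [Fintype a] [Fintype b] [Fintype c]
    (ρ : Matrix (a × b × c) (a × b × c) ℂ) : Matrix (a × b) (a × b) ℂ :=
  Matrix.of fun p q => ∑ k : c, ρ (p.1, p.2, k) (q.1, q.2, k)

/-!
Every `σ^{BC}` witnessing `λ` for `H_min(A|BC)` gives the witness `tr_C σ^{BC}` for `H_min(A|B)`,
since the partial trace is positive. Conversely, if `ρ^{AB} ≤ 2^λ I^A ⊗ σ^B`, the operator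
inequality `ρ^{ABC} ≤ |C| ρ^{AB} ⊗ I^C` yields
`ρ^{ABC} ≤ 2^{λ + 2 log |C|} I^A ⊗ (σ^B ⊗ I^C / |C|)`; that inequality is Cauchy–Schwarz for
the form `x ↦ x* ρ x` over the `|C|` slices of `x`. Normalization of `ρ` bounds every feasible
`λ` below by `-log |A|`, so both infima are finite.
-/

open scoped MatrixOrder

namespace Matrix

variable {𝕜 ι κ : Type*} [RCLike 𝕜]

theorem PosSemidef.dotProduct_mulVec_sum_le [Fintype ι] {M : Matrix ι ι 𝕜} (hM : M.PosSemidef)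
    (s : Finset κ) (v : κ → ι → 𝕜) :
    star (∑ k ∈ s, v k) ⬝ᵥ M *ᵥ ∑ k ∈ s, v k ≤ s.card * ∑ k ∈ s, star (v k) ⬝ᵥ M *ᵥ v k := by
  set q : (ι → 𝕜) → (ι → 𝕜) → 𝕜 := fun x y => star x ⬝ᵥ M *ᵥ y
  have hq_sub (x y : ι → 𝕜) : q (x - y) (x - y) = q x x - q x y - q y x + q y y := by
    simp only [q, star_sub, mulVec_sub, sub_dotProduct, dotProduct_sub]
    ring
  have hq_sum : q (∑ k ∈ s, v k) (∑ k ∈ s, v k) = ∑ k ∈ s, ∑ l ∈ s, q (v k) (v l) := by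
    simp only [q, star_sum, sum_dotProduct, mulVec_sum, dotProduct_sum]
    exact Finset.sum_comm
  have hexpand : ∑ k ∈ s, ∑ l ∈ s, q (v k - v l) (v k - v l) =
      2 * (s.card * ∑ k ∈ s, q (v k) (v k) - q (∑ k ∈ s, v k) (∑ k ∈ s, v k)) := by
    simp only [hq_sub, hq_sum, Finset.sum_add_distrib, Finset.sum_sub_distrib, Finset.sum_const,
      nsmul_eq_mul, ← Finset.mul_sum]
    rw [Finset.sum_comm (f := fun k l => q (v l) (v k))]
    ring
  have hnonneg : 0 ≤ ∑ k ∈ s, ∑ l ∈ s, q (v k - v l) (v k - v l) :=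
    Finset.sum_nonneg fun k _ => Finset.sum_nonneg fun l _ => hM.dotProduct_mulVec_nonneg _
  -- `∑ₖ ∑ₗ q (vₖ - vₗ) ≥ 0` is twice the claim.
  rw [hexpand] at hnonneg
  have := mul_nonneg (inv_nonneg.mpr zero_le_two : (0 : 𝕜) ≤ 2⁻¹) hnonneg
  rwa [inv_mul_cancel_left₀ two_ne_zero, sub_nonneg] at this

theorem submatrix_le_submatrix {ι' : Type*} {A B : Matrix ι ι 𝕜} (h : A ≤ B) (e : ι' → ι) :
    A.submatrix e e ≤ B.submatrix e e :=
  PosSemidef.submatrix h e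

theorem kronecker_le_kronecker_of_nonneg_right [Fintype ι] [Fintype κ] {A A' : Matrix ι ι 𝕜}
    {B : Matrix κ κ 𝕜} (h : A ≤ A') (hB : 0 ≤ B) : A ⊗ₖ B ≤ A' ⊗ₖ B := by
  rw [le_iff, ← sub_add_cancel A' A, add_kronecker, add_sub_cancel_right]
  exact PosSemidef.kronecker h hB.posSemidef

section PartialTrace

variable [Fintype κ]

def partialTraceRight {α : Type*} [AddCommMonoid α] (N : Matrix (ι × κ) (ι × κ) α) :
    Matrix ι ι α :=
  of fun i j => ∑ k, N (i, k) (j, k)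

@[simp]
theorem partialTraceRight_apply {α : Type*} [AddCommMonoid α] (N : Matrix (ι × κ) (ι × κ) α)
    (i j : ι) : partialTraceRight N i j = ∑ k, N (i, k) (j, k) := rfl

theorem trace_partialTraceRight [Fintype ι] {α : Type*} [AddCommMonoid α]
    (N : Matrix (ι × κ) (ι × κ) α) : (partialTraceRight N).trace = N.trace := by
  simp [trace, Fintype.sum_prod_type]

theorem partialTraceRight_sub {α : Type*} [AddCommGroup α] (N N' : Matrix (ι × κ) (ι × κ) α) :
    partialTraceRight (N - N') = partialTraceRight N - partialTraceRight N' := by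
  ext i j
  simp [Finset.sum_sub_distrib]

theorem partialTraceRight_smul {α : Type*} [Semiring α] (r : α) (N : Matrix (ι × κ) (ι × κ) α) :
    partialTraceRight (r • N) = r • partialTraceRight N := by
  ext i j
  simp [Finset.mul_sum]

theorem partialTraceRight_kronecker_submatrix_prodAssoc {α ι' : Type*} [CommSemiring α]
    (A : Matrix ι' ι' α) (B : Matrix (ι × κ) (ι × κ) α) :
    partialTraceRight ((A ⊗ₖ B).submatrix (Equiv.prodAssoc ι' ι κ) (Equiv.prodAssoc ι' ι κ)) =
      A ⊗ₖ partialTraceRight B := by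
  ext ⟨i', i⟩ ⟨j', j⟩
  simp [Finset.mul_sum]

theorem IsHermitian.partialTraceRight {N : Matrix (ι × κ) (ι × κ) 𝕜} (hN : N.IsHermitian) :
    N.partialTraceRight.IsHermitian :=
  IsHermitian.ext fun i j => by simp [hN.apply]

def kroneckerSingle {α : Type*} [Zero α] [DecidableEq κ] (y : ι → α) (m : κ) : ι × κ → α :=
  fun p => if p.2 = m then y p.1 else 0

theorem sum_kroneckerSingle {α : Type*} [AddCommMonoid α] [DecidableEq κ] (x : ι × κ → α) :
    ∑ k, kroneckerSingle (fun i => x (i, k)) k = x := by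
  ext ⟨i, k⟩
  simp [kroneckerSingle]

theorem dotProduct_partialTraceRight_mulVec [Fintype ι] [DecidableEq κ]
    (N : Matrix (ι × κ) (ι × κ) 𝕜) (y : ι → 𝕜) :
    star y ⬝ᵥ partialTraceRight N *ᵥ y =
      ∑ m, star (kroneckerSingle y m) ⬝ᵥ N *ᵥ kroneckerSingle y m := by
  simp only [dotProduct, mulVec, partialTraceRight_apply, kroneckerSingle, Fintype.sum_prod_type,
    Pi.star_apply, apply_ite star, star_zero, ite_mul, zero_mul, mul_ite, mul_zero,
    Finset.sum_mul, Finset.mul_sum, Finset.sum_ite_irrel, Finset.sum_const_zero,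
    Finset.sum_ite_eq', Finset.mem_univ, if_true]
  exact (Finset.sum_congr rfl fun _ _ => Finset.sum_comm).trans Finset.sum_comm

theorem PosSemidef.partialTraceRight [Fintype ι] {N : Matrix (ι × κ) (ι × κ) 𝕜}
    (hN : N.PosSemidef) : N.partialTraceRight.PosSemidef := by
  classical
  refine .of_dotProduct_mulVec_nonneg hN.1.partialTraceRight fun y => ?_
  rw [dotProduct_partialTraceRight_mulVec]
  exact Finset.sum_nonneg fun m _ => hN.dotProduct_mulVec_nonneg _

theorem partialTraceRight_mono [Fintype ι] {N N' : Matrix (ι × κ) (ι × κ) 𝕜} (h : N ≤ N') :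
    partialTraceRight N ≤ partialTraceRight N' := by
  rw [le_iff, ← partialTraceRight_sub]
  exact PosSemidef.partialTraceRight h

theorem dotProduct_kronecker_one_mulVec [Fintype ι] [DecidableEq κ] (M : Matrix ι ι 𝕜)
    (x : ι × κ → 𝕜) :
    star x ⬝ᵥ (M ⊗ₖ (1 : Matrix κ κ 𝕜)) *ᵥ x =
      ∑ k, star (fun i => x (i, k)) ⬝ᵥ M *ᵥ fun i => x (i, k) := by
  simp only [dotProduct, mulVec, kronecker_apply, one_apply, Fintype.sum_prod_type,
    Pi.star_apply, mul_ite, mul_one, mul_zero, ite_mul, zero_mul, Finset.sum_ite_eq,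
    Finset.mem_univ, if_true, Finset.mul_sum]
  exact Finset.sum_comm

theorem le_card_nsmul_partialTraceRight_kronecker_one [Fintype ι] [DecidableEq κ]
    {N : Matrix (ι × κ) (ι × κ) 𝕜} (hN : N.PosSemidef) :
    N ≤ Fintype.card κ • (partialTraceRight N ⊗ₖ (1 : Matrix κ κ 𝕜)) := by
  have hP : (partialTraceRight N ⊗ₖ (1 : Matrix κ κ 𝕜)).PosSemidef :=
    hN.partialTraceRight.kronecker .one
  refine .of_dotProduct_mulVec_nonneg
    (IsSelfAdjoint.isHermitian ((selfAdjoint _).nsmul_mem hP.1.isSelfAdjoint _) |>.sub hN.1)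
    fun x => ?_
  set xs : κ → ι → 𝕜 := fun k i => x (i, k)
  -- Cauchy–Schwarz over the slices `x = ∑ₖ xₖ ⊗ eₖ`, then add the off-diagonal terms `xₖ ⊗ eₘ`.
  have key : star x ⬝ᵥ N *ᵥ x ≤ Fintype.card κ *
      ∑ k, ∑ m, star (kroneckerSingle (xs k) m) ⬝ᵥ N *ᵥ kroneckerSingle (xs k) m := calc
    star x ⬝ᵥ N *ᵥ x
        = star (∑ k, kroneckerSingle (xs k) k) ⬝ᵥ N *ᵥ ∑ k, kroneckerSingle (xs k) k := by
      rw [sum_kroneckerSingle]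
    _ ≤ Fintype.card κ * ∑ k, star (kroneckerSingle (xs k) k) ⬝ᵥ N *ᵥ kroneckerSingle (xs k) k :=
      hN.dotProduct_mulVec_sum_le _ _
    _ ≤ _ := by
      gcongr with k
      exact Finset.single_le_sum (fun m _ => hN.dotProduct_mulVec_nonneg _) (Finset.mem_univ k)
  rw [sub_mulVec, dotProduct_sub, sub_nonneg, smul_mulVec, dotProduct_smul,
    dotProduct_kronecker_one_mulVec, nsmul_eq_mul]
  simpa only [dotProduct_partialTraceRight_mulVec] using key

end PartialTrace

end Matrix

theorem Real.sInf_le_sInf_add {S T : Set ℝ} {k : ℝ} (hk : 0 ≤ k) (hT : BddBelow T)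
    (hTS : T ⊆ S) (hST : ∀ x ∈ S, x + k ∈ T) : sInf T ≤ sInf S + k := by
  rcases S.eq_empty_or_nonempty with rfl | hS
  · simp [Set.subset_empty_iff.mp hTS, hk]
  · have : sInf T - k ≤ sInf S := le_csInf hS fun x hx => by
      linarith [csInf_le hT (hST x hx)]
    linarith

theorem Real.rpow_add_two_mul_logb {b x : ℝ} (hb : 0 < b) (hb1 : b ≠ 1) (hx : 0 < x) (y : ℝ) :
    b ^ (y + 2 * Real.logb b x) = b ^ y * x ^ 2 := by
  rw [Real.rpow_add hb, mul_comm 2, Real.rpow_mul hb.le, Real.rpow_logb hb hb1 hx, Real.rpow_two]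

section MinEntropy

variable {a b c : Type*} [Fintype a] [Fintype b] [Fintype c]

theorem margAB_eq_partialTraceRight (ρ : Matrix (a × b × c) (a × b × c) ℂ) :
    margAB ρ = partialTraceRight (ρ.submatrix (Equiv.prodAssoc a b c) (Equiv.prodAssoc a b c)) :=
  rfl

variable [DecidableEq a]

def dominatingExponents (ρ : Matrix (a × b) (a × b) ℂ) : Set ℝ :=
  {lam | ∃ σ : Matrix b b ℂ, σ.PosSemidef ∧ σ.trace = 1 ∧
    ρ ≤ (((2 : ℝ) ^ lam : ℝ) : ℂ) • ((1 : Matrix a a ℂ) ⊗ₖ σ)}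

theorem HminCond_eq_neg_sInf [DecidableEq b] (ρ : Matrix (a × b) (a × b) ℂ) :
    HminCond ρ = -sInf (dominatingExponents ρ) := rfl

theorem neg_logb_card_le_of_mem_dominatingExponents {ρ : Matrix (a × b) (a × b) ℂ}
    (hρ1 : ρ.trace = 1) {lam : ℝ} (h : lam ∈ dominatingExponents ρ) :
    -Real.logb 2 (Fintype.card a) ≤ lam := by
  obtain ⟨σ, -, hσ1, hle⟩ := h
  have htr := PosSemidef.trace_nonneg hle
  rw [trace_sub, trace_smul, trace_kronecker, trace_one, hσ1, hρ1, mul_one, smul_eq_mul,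
    sub_nonneg] at htr
  have h1 : 1 ≤ (2 : ℝ) ^ lam * Fintype.card a := by exact_mod_cast htr
  have hcard : (0 : ℝ) < Fintype.card a :=
    pos_of_mul_pos_right (one_pos.trans_le h1) (by positivity)
  have := Real.logb_nonneg one_lt_two h1
  rw [Real.logb_mul (by positivity) hcard.ne', Real.logb_rpow two_pos (by norm_num)] at this
  linarith

theorem dominatingExponents_subset_margAB (ρ : Matrix (a × b × c) (a × b × c) ℂ) :
    dominatingExponents ρ ⊆ dominatingExponents (margAB ρ) := by
  rintro lam ⟨τ, hτ, hτ1, hle⟩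
  refine ⟨partialTraceRight τ, hτ.partialTraceRight, by rw [trace_partialTraceRight, hτ1], ?_⟩
  rw [margAB_eq_partialTraceRight]
  have := partialTraceRight_mono (submatrix_le_submatrix hle (Equiv.prodAssoc a b c))
  rwa [submatrix_smul, Pi.smul_apply, Pi.smul_apply, partialTraceRight_smul,
    partialTraceRight_kronecker_submatrix_prodAssoc] at this

theorem add_two_logb_card_mem_dominatingExponents [DecidableEq c] [Nonempty c]
    {ρ : Matrix (a × b × c) (a × b × c) ℂ} (hρ : ρ.PosSemidef) {lam : ℝ}
    (h : lam ∈ dominatingExponents (margAB ρ)) :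
    lam + 2 * Real.logb 2 (Fintype.card c) ∈ dominatingExponents ρ := by
  obtain ⟨σ, hσ, hσ1, hle⟩ := h
  rw [margAB_eq_partialTraceRight] at hle
  set n := Fintype.card c
  set e := Equiv.prodAssoc a b c
  have hn_pos : (0 : ℝ) < n := Nat.cast_pos.mpr Fintype.card_pos
  have hn : (n : ℂ) ≠ 0 := Nat.cast_ne_zero.mpr Fintype.card_ne_zero
  refine ⟨σ ⊗ₖ ((n : ℂ)⁻¹ • 1), hσ.kronecker (PosSemidef.one.smul (by positivity)),
    by rw [trace_kronecker, trace_smul, trace_one, hσ1, smul_eq_mul, inv_mul_cancel₀ hn, one_mul],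
    ?_⟩
  have hscalar : (n : ℂ) * (((2 : ℝ) ^ lam : ℝ) : ℂ) =
      (((2 : ℝ) ^ (lam + 2 * Real.logb 2 n) : ℝ) : ℂ) * (n : ℂ)⁻¹ := by
    rw [Real.rpow_add_two_mul_logb two_pos (by norm_num) hn_pos]
    push_cast
    field_simp
  calc ρ = (ρ.submatrix e e).submatrix e.symm e.symm := by simp
    _ ≤ (n • (partialTraceRight (ρ.submatrix e e) ⊗ₖ (1 : Matrix c c ℂ))).submatrix
          e.symm e.symm :=
      submatrix_le_submatrix (le_card_nsmul_partialTraceRight_kronecker_one (hρ.submatrix _)) _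
    _ ≤ (n • (((((2 : ℝ) ^ lam : ℝ) : ℂ) • ((1 : Matrix a a ℂ) ⊗ₖ σ)) ⊗ₖ
          (1 : Matrix c c ℂ))).submatrix e.symm e.symm :=
      submatrix_le_submatrix (nsmul_le_nsmul_right
        (kronecker_le_kronecker_of_nonneg_right hle PosSemidef.one.nonneg) n) _
    _ = _ := by
      rw [← Nat.cast_smul_eq_nsmul ℂ, smul_kronecker, smul_smul, submatrix_smul, Pi.smul_apply,
        Pi.smul_apply, kronecker_assoc', kronecker_smul, kronecker_smul, smul_smul, hscalar]

end MinEntropy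

/-- Unlockability of the conditional min-entropy:
`H_min(A|B)_ρ ≤ H_min(A|BC)_ρ + 2 log |C|`. -/
theorem HminCond_unlock {a b c : Type*} [Fintype a] [Fintype b] [Fintype c]
    [DecidableEq a] [DecidableEq b] [DecidableEq c]
    (ρ : Matrix (a × b × c) (a × b × c) ℂ) (hρ : ρ.PosSemidef) (hρ1 : ρ.trace = 1) :
    HminCond (margAB ρ) ≤ HminCond ρ + 2 * Real.logb 2 (Fintype.card c) := by
  have : Nonempty c := by
    by_contra! hc
    simp [trace_eq_zero_of_isEmpty] at hρ1
  have hk : 0 ≤ 2 * Real.logb 2 (Fintype.card c) :=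
    mul_nonneg zero_le_two (Real.logb_nonneg one_lt_two (Nat.one_le_cast.mpr Fintype.card_pos))
  have := Real.sInf_le_sInf_add hk
    ⟨_, fun _ => neg_logb_card_le_of_mem_dominatingExponents hρ1⟩
    (dominatingExponents_subset_margAB ρ)
    (fun _ => add_two_logb_card_mem_dominatingExponents hρ)
  rw [HminCond_eq_neg_sInf, HminCond_eq_neg_sInf]
  linarith
end

section
/- Partial trace operator bound: for any positive semi-definite operator ρ^{ABC} on A ⊗ B ⊗ C, the operator inequality |C| · (Tr_C ρ^{ABC}) ⊗ I^C ≥ ρ^{ABC} holds, where |C| is the dimension of C. -/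
/-!
With `V m k = I ⊗ |m⟩⟨k|`, the map `ρ ↦ Tr_C ρ ⊗ I` has Kraus operators `V m k`, and
`ρ = (∑ k, V k k)ᴴ ρ (∑ k, V k k)`. The operator Cauchy–Schwarz inequality
`(∑ k, b k)ᴴ ρ (∑ k, b k) ≤ |C| • ∑ k, (b k)ᴴ ρ (b k)` bounds `ρ` by `|C|` times the diagonal
terms `m = k` of the Kraus sum, and the remaining terms are positive semidefinite.
-/

open Matrix ComplexOrder Kronecker

/-- Partial trace over the system `C` of an operator on `(A ⊗ B) ⊗ C`. -/
noncomputable def ptraceC {a b c : Type*} [Fintype a] [Fintype b] [Fintype c]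
    (ρ : Matrix ((a × b) × c) ((a × b) × c) ℂ) : Matrix (a × b) (a × b) ℂ :=
  Matrix.of fun p q => ∑ k : c, ρ (p, k) (q, k)

section StarOrderedRing

variable {R ι : Type*} [NonUnitalRing R] [PartialOrder R] [StarRing R] [StarOrderedRing R]

theorem star_mul_mul_add_star_mul_mul_le {a : R} (ha : 0 ≤ a) (x y : R) :
    star x * a * y + star y * a * x ≤ star x * a * x + star y * a * y := by
  rw [← sub_nonneg]
  convert star_left_conjugate_nonneg ha (x - y) using 1
  simp only [star_sub, sub_mul, mul_sub]
  abel

theorem star_sum_mul_mul_sum_le_card_nsmul {a : R} (ha : 0 ≤ a) (s : Finset ι) (b : ι → R) :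
    star (∑ i ∈ s, b i) * a * ∑ i ∈ s, b i ≤ s.card • ∑ i ∈ s, star (b i) * a * b i := by
  classical
  induction s using Finset.induction_on with
  | empty => simp
  | insert j s hj ih =>
    have cross : star (b j) * a * ∑ i ∈ s, b i + star (∑ i ∈ s, b i) * a * b j ≤
        s.card • (star (b j) * a * b j) + ∑ i ∈ s, star (b i) * a * b i := by
      have h := Finset.sum_le_sum fun i (_ : i ∈ s) =>
        star_mul_mul_add_star_mul_mul_le ha (b j) (b i)
      rwa [Finset.sum_add_distrib, Finset.sum_add_distrib, Finset.sum_const, ← Finset.mul_sum,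
        ← Finset.sum_mul, ← Finset.sum_mul, ← star_sum] at h
    calc star (∑ i ∈ insert j s, b i) * a * ∑ i ∈ insert j s, b i
        = star (b j) * a * b j + (star (b j) * a * ∑ i ∈ s, b i +
            star (∑ i ∈ s, b i) * a * b j) + star (∑ i ∈ s, b i) * a * ∑ i ∈ s, b i := by
          simp only [Finset.sum_insert hj, star_add, add_mul, mul_add]
          abel
      _ ≤ star (b j) * a * b j + (s.card • (star (b j) * a * b j) +
            ∑ i ∈ s, star (b i) * a * b i) + s.card • ∑ i ∈ s, star (b i) * a * b i := by
          gcongr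
      _ = (insert j s).card • ∑ i ∈ insert j s, star (b i) * a * b i := by
          rw [Finset.sum_insert hj, Finset.card_insert_of_notMem hj, nsmul_add, succ_nsmul,
            succ_nsmul]
          abel

end StarOrderedRing

section OneKroneckerSingle

variable (n : Type*) {c : Type*} [DecidableEq n] [DecidableEq c]

def oneKroneckerSingle (m k : c) : Matrix (n × c) (n × c) ℂ :=
  (1 : Matrix n n ℂ) ⊗ₖ single m k 1

theorem sum_oneKroneckerSingle_self [Fintype c] : ∑ k : c, oneKroneckerSingle n k k = 1 := by
  ext ⟨p, i⟩ ⟨q, j⟩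
  by_cases hij : i = j <;>
    simp [oneKroneckerSingle, Matrix.sum_apply, single_apply, one_apply, ite_and, hij]

variable {n}

theorem star_oneKroneckerSingle_mul_mul_apply [Fintype n] [Fintype c]
    (ρ : Matrix (n × c) (n × c) ℂ) (m k : c) (p q : n) (i j : c) :
    (star (oneKroneckerSingle n m k) * ρ * oneKroneckerSingle n m k) (p, i) (q, j) =
      if i = k ∧ j = k then ρ (p, m) (q, m) else 0 := by
  by_cases hi : i = k <;>
    simp [oneKroneckerSingle, mul_apply, single_apply, one_apply, Fintype.sum_prod_type, ite_and,
      apply_ite (starRingEnd ℂ), hi, eq_comm (a := k)]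

end OneKroneckerSingle

theorem ptraceC_kronecker_one_eq_sum {a b c : Type*} [Fintype a] [Fintype b] [Fintype c]
    [DecidableEq a] [DecidableEq b] [DecidableEq c] (ρ : Matrix ((a × b) × c) ((a × b) × c) ℂ) :
    ptraceC ρ ⊗ₖ (1 : Matrix c c ℂ) =
      ∑ k, ∑ m, star (oneKroneckerSingle (a × b) m k) * ρ * oneKroneckerSingle (a × b) m k := by
  ext ⟨p, i⟩ ⟨q, j⟩
  simp [Matrix.sum_apply, star_oneKroneckerSingle_mul_mul_apply, ptraceC, one_apply, ite_and,
    eq_comm]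

theorem ptrace_dim_operator_bound_general {a b c : Type*} [Fintype a] [Fintype b] [Fintype c]
    [DecidableEq c]
    (ρ : Matrix ((a × b) × c) ((a × b) × c) ℂ) (hρ : ρ.PosSemidef) :
    (((Fintype.card c : ℂ)) • (ptraceC ρ ⊗ₖ (1 : Matrix c c ℂ)) - ρ).PosSemidef := by
  classical
  open scoped MatrixOrder in
  have hρ_nonneg : 0 ≤ ρ := nonneg_iff_posSemidef.mpr hρ
  let V : c → c → Matrix ((a × b) × c) ((a × b) × c) ℂ := oneKroneckerSingle (a × b)
  rw [← Matrix.le_iff, ptraceC_kronecker_one_eq_sum, Nat.cast_smul_eq_nsmul]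
  calc ρ = star (∑ k, V k k) * ρ * ∑ k, V k k := by simp [V, sum_oneKroneckerSingle_self]
    _ ≤ Fintype.card c • ∑ k, star (V k k) * ρ * V k k :=
      star_sum_mul_mul_sum_le_card_nsmul hρ_nonneg _ _
    _ ≤ Fintype.card c • ∑ k, ∑ m, star (V m k) * ρ * V m k := by
      gcongr with k
      exact Finset.single_le_sum (fun m _ => star_left_conjugate_nonneg hρ_nonneg (V m k))
        (Finset.mem_univ k)

/-- Partial trace operator bound: `|C| · (Tr_C ρ) ⊗ I^C ≥ ρ` in the Loewner order, for any
positive semi-definite `ρ` on `A ⊗ B ⊗ C`. -/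
theorem ptrace_dim_operator_bound {a b c : Type*} [Fintype a] [Fintype b] [Fintype c]
    [DecidableEq a] [DecidableEq b] [DecidableEq c]
    (ρ : Matrix ((a × b) × c) ((a × b) × c) ℂ) (hρ : ρ.PosSemidef) :
    (((Fintype.card c : ℂ)) • (ptraceC ρ ⊗ₖ (1 : Matrix c c ℂ)) - ρ).PosSemidef :=
  ptrace_dim_operator_bound_general ρ hρ
end

section
/- Triangle inequality for the purified distance: for sub-normalized states ρ, σ, τ on a finite-dimensional Hilbert space, P(ρ,τ) ≤ P(ρ,σ) + P(σ,τ). -/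
open Matrix ComplexOrder
open scoped Classical

/-- Total positive-semidefinite square root: the PSD square root when the matrix is PSD,
and `0` otherwise. -/

noncomputable def msqrt {n : Type*} [Fintype n] [DecidableEq n] (ρ : Matrix n n ℂ) :
    Matrix n n ℂ :=
  if h : ρ.PosSemidef then
    (h.1.eigenvectorUnitary : Matrix n n ℂ) * diagonal ((↑) ∘ (√·) ∘ h.1.eigenvalues) *
      (star h.1.eigenvectorUnitary : Matrix n n ℂ)
  else 0

/-- Trace norm `‖M‖₁ = Tr √(M Mᴴ)`. -/
noncomputable def traceNorm {n : Type*} [Fintype n] [DecidableEq n] (M : Matrix n n ℂ) : ℝ :=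
  ((msqrt (M * Mᴴ)).trace).re

/-- Fidelity `F(ρ,σ) = ‖√ρ √σ‖₁`. -/
noncomputable def fidelity {n : Type*} [Fintype n] [DecidableEq n] (ρ σ : Matrix n n ℂ) : ℝ :=
  traceNorm (msqrt ρ * msqrt σ)

/-- Generalized fidelity `F̄(ρ,σ) = F(ρ,σ) + √((1 - Tr ρ)(1 - Tr σ))`. -/
noncomputable def genFid {n : Type*} [Fintype n] [DecidableEq n] (ρ σ : Matrix n n ℂ) : ℝ :=
  fidelity ρ σ + Real.sqrt ((1 - ρ.trace.re) * (1 - σ.trace.re))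

/-- Purified distance `P(ρ,σ) = √(1 - F̄(ρ,σ)²)`. -/
noncomputable def pdist {n : Type*} [Fintype n] [DecidableEq n] (ρ σ : Matrix n n ℂ) : ℝ :=
  Real.sqrt (1 - (genFid ρ σ) ^ 2)

/-!
Purify the extension `ρ ⊕ (1 - Tr ρ)` of each sub-normalized state by the unit vector
`√ρ U ⊕ √(1 - Tr ρ)`, `U` unitary. The overlap of two such vectors is
`Tr (√ρ √σ V U†) + √((1 - Tr ρ) (1 - Tr σ))`; by the polar decomposition of `√ρ √σ` its real part
is at most `F̄(ρ,σ)`, with equality for a suitable unitary (Uhlmann). Purifying `ρ, σ, τ` so that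
both optimal overlaps involve the same vector for `σ` gives unit vectors `x, y, z` with
`⟪x, y⟫ = F̄(ρ,σ)`, `⟪y, z⟫ = F̄(σ,τ)` and `Re ⟪x, z⟫ ≤ F̄(ρ,τ)`. Since `P = sin (arccos F̄)`, the
claim is the triangle inequality for angles between unit vectors, which follows by projecting
`x` and `z` onto the orthogonal complement of `y`.
-/

open scoped InnerProductSpace MatrixOrder

theorem sqrt_one_sub_sq_le_add_of_mul_sub_le {α β γ : ℝ} (hα₀ : 0 ≤ α) (hα₁ : α ≤ 1)
    (hβ₀ : 0 ≤ β) (hβ₁ : β ≤ 1) (hγ : α * β - √(1 - α ^ 2) * √(1 - β ^ 2) ≤ γ) :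
    √(1 - γ ^ 2) ≤ √(1 - α ^ 2) + √(1 - β ^ 2) := by
  set u := √(1 - α ^ 2)
  set v := √(1 - β ^ 2)
  have hu₀ : 0 ≤ u := Real.sqrt_nonneg _
  have hv₀ : 0 ≤ v := Real.sqrt_nonneg _
  have hu : u ^ 2 = 1 - α ^ 2 := Real.sq_sqrt (by nlinarith)
  have hv : v ^ 2 = 1 - β ^ 2 := Real.sq_sqrt (by nlinarith)
  have key : 1 - γ ^ 2 ≤ (u + v) ^ 2 := by
    rcases le_or_gt (α * β) (u * v) with h | h
    · nlinarith [sq_nonneg (α - β), sq_nonneg γ, mul_nonneg hu₀ hv₀]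
    · have hγ₀ : 0 ≤ γ := by nlinarith
      have hαβ : α * β ≤ 1 := by nlinarith
      nlinarith [mul_nonneg (mul_nonneg hu₀ hv₀) (sub_nonneg.2 hαβ), sq_nonneg (u * v)]
  calc √(1 - γ ^ 2) ≤ √((u + v) ^ 2) := Real.sqrt_le_sqrt key
    _ = u + v := Real.sqrt_sq (by positivity)

section InnerProductSpace

variable {𝕜 E : Type*} [RCLike 𝕜] [NormedAddCommGroup E] [InnerProductSpace 𝕜 E]

open RCLike

theorem norm_sub_ofReal_smul_of_inner_eq {x y : E} (hx : ‖x‖ = 1) (hy : ‖y‖ = 1) {α : ℝ}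
    (hxy : ⟪x, y⟫_𝕜 = α) : ‖x - (α : 𝕜) • y‖ = √(1 - α ^ 2) := by
  rw [← Real.sqrt_sq (norm_nonneg _), @norm_sub_sq 𝕜, inner_smul_right, hxy, norm_smul, hx, hy,
    norm_ofReal, ← ofReal_mul, ofReal_re, mul_one, sq_abs]
  ring_nf

theorem mul_sub_sqrt_mul_sqrt_le_re_inner {x y z : E} (hx : ‖x‖ = 1) (hy : ‖y‖ = 1)
    (hz : ‖z‖ = 1) {α β : ℝ} (hxy : ⟪x, y⟫_𝕜 = α) (hyz : ⟪y, z⟫_𝕜 = β) :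
    α * β - √(1 - α ^ 2) * √(1 - β ^ 2) ≤ re ⟪x, z⟫_𝕜 := by
  have hzy : ⟪z, y⟫_𝕜 = β := by rw [← inner_conj_symm, hyz, conj_ofReal]
  have hyy : ⟪y, y⟫_𝕜 = 1 := by rw [inner_self_eq_norm_sq_to_K, hy]; norm_num
  have hinner : ⟪x - (α : 𝕜) • y, z - (β : 𝕜) • y⟫_𝕜 = ⟪x, z⟫_𝕜 - (α * β : ℝ) := by
    simp only [inner_sub_left, inner_sub_right, inner_smul_left, inner_smul_right, hxy, hyz, hyy,
      conj_ofReal]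
    push_cast
    ring
  have hcs := re_inner_le_norm (𝕜 := 𝕜) (-(x - (α : 𝕜) • y)) (z - (β : 𝕜) • y)
  rw [inner_neg_left, map_neg, hinner, map_sub, ofReal_re, norm_neg,
    norm_sub_ofReal_smul_of_inner_eq hx hy hxy,
    norm_sub_ofReal_smul_of_inner_eq hz hy hzy] at hcs
  linarith

theorem sqrt_one_sub_sq_le_of_inner_eq {x y z : E} (hx : ‖x‖ = 1) (hy : ‖y‖ = 1)
    (hz : ‖z‖ = 1) {α β γ : ℝ} (hxy : ⟪x, y⟫_𝕜 = α) (hyz : ⟪y, z⟫_𝕜 = β) (hα : 0 ≤ α)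
    (hβ : 0 ≤ β) (hγ : re ⟪x, z⟫_𝕜 ≤ γ) :
    √(1 - γ ^ 2) ≤ √(1 - α ^ 2) + √(1 - β ^ 2) := by
  have le_one {a b : E} {c : ℝ} (ha : ‖a‖ = 1) (hb : ‖b‖ = 1) (hab : ⟪a, b⟫_𝕜 = c) : c ≤ 1 := by
    have h := norm_inner_le_norm (𝕜 := 𝕜) a b
    rw [hab, ha, hb, mul_one, norm_ofReal] at h
    exact (le_abs_self c).trans h
  exact sqrt_one_sub_sq_le_add_of_mul_sub_le hα (le_one hx hy hxy) hβ (le_one hy hz hyz)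
    ((mul_sub_sqrt_mul_sqrt_le_re_inner hx hy hz hxy hyz).trans hγ)

end InnerProductSpace

theorem LinearMap.exists_linearIsometryEquiv_apply_eq {𝕜 V : Type*} [RCLike 𝕜]
    [NormedAddCommGroup V] [InnerProductSpace 𝕜 V] [FiniteDimensional 𝕜 V]
    (f g : V →ₗ[𝕜] V) (h : ∀ v, ‖f v‖ = ‖g v‖) :
    ∃ U : V ≃ₗᵢ[𝕜] V, ∀ v, U (f v) = g v := by
  have hker : LinearMap.ker f ≤ LinearMap.ker g := fun v hv => by
    simpa [← norm_eq_zero, ← h v] using hv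
  let L : LinearMap.range f →ₗ[𝕜] V :=
    (LinearMap.ker f).liftQ g hker ∘ₗ f.quotKerEquivRange.symm.toLinearMap
  have hL : ∀ v, L ⟨f v, LinearMap.mem_range_self f v⟩ = g v := fun v => by
    simp [L, LinearMap.quotKerEquivRange_symm_apply_image]
  let L' : LinearMap.range f →ₗᵢ[𝕜] V :=
    { L with norm_map' := by rintro ⟨_, v, rfl⟩; exact (congrArg norm (hL v)).trans (h v).symm }
  refine ⟨L'.extend.toLinearIsometryEquiv rfl, fun v => ?_⟩
  exact (L'.extend_apply ⟨f v, LinearMap.mem_range_self f v⟩).trans (hL v)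

theorem Matrix.exists_unitary_mul_eq_of_conjTranspose_mul_self_eq {𝕜 n : Type*} [RCLike 𝕜]
    [Fintype n] [DecidableEq n] {A B : Matrix n n 𝕜} (h : Aᴴ * A = Bᴴ * B) :
    ∃ U ∈ unitaryGroup n 𝕜, U * A = B := by
  have hnorm (X : Matrix n n 𝕜) (v : EuclideanSpace 𝕜 n) : ‖toEuclideanCLM (𝕜 := 𝕜) X v‖ ^ 2 =
      RCLike.re (inner 𝕜 v (toEuclideanCLM (𝕜 := 𝕜) (Xᴴ * X) v)) := by
    rw [← star_eq_conjTranspose, map_mul, map_star, ContinuousLinearMap.star_eq_adjoint,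
      mul_apply_eq_comp, ContinuousLinearMap.adjoint_inner_right,
      ← inner_self_eq_norm_sq (𝕜 := 𝕜)]
  obtain ⟨V, hV⟩ := LinearMap.exists_linearIsometryEquiv_apply_eq
    (toEuclideanCLM (𝕜 := 𝕜) A).toLinearMap (toEuclideanCLM (𝕜 := 𝕜) B).toLinearMap fun v => by
      rw [← sq_eq_sq₀ (norm_nonneg _) (norm_nonneg _)]
      exact (hnorm A v).trans (h ▸ (hnorm B v).symm)
  let U : unitary (EuclideanSpace 𝕜 n →L[𝕜] EuclideanSpace 𝕜 n) :=
    Unitary.linearIsometryEquiv.symm V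
  refine ⟨(toEuclideanCLM (n := n) (𝕜 := 𝕜)).symm U, Unitary.map_mem _ U.2,
    EquivLike.injective (toEuclideanCLM (n := n) (𝕜 := 𝕜)) ?_⟩
  rw [map_mul, StarAlgEquiv.apply_symm_apply]
  ext1 v
  exact hV v

section augmentedVec
variable {n : Type*} [Fintype n]

noncomputable def augmentedVec (X : Matrix n n ℂ) (s : ℝ) : EuclideanSpace ℂ (n × n ⊕ Unit) :=
  WithLp.toLp 2 (Sum.elim (fun p => X p.1 p.2) fun _ => (s : ℂ))

lemma inner_augmentedVec (X Y : Matrix n n ℂ) (s t : ℝ) :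
    ⟪augmentedVec X s, augmentedVec Y t⟫_ℂ = (Xᴴ * Y).trace + (s * t : ℝ) := by
  simp only [augmentedVec, PiLp.inner_apply, RCLike.inner_apply, Fintype.sum_sum_type,
    Sum.elim_inl, Sum.elim_inr, Fintype.sum_prod_type, Matrix.trace, Matrix.diag, Matrix.mul_apply,
    Matrix.conjTranspose_apply]
  rw [Finset.sum_comm (γ := n)]
  congr 1
  · simp only [mul_comm, Complex.star_def]
  · simp [mul_comm]

lemma norm_augmentedVec_sq (X : Matrix n n ℂ) (s : ℝ) :
    ‖augmentedVec X s‖ ^ 2 = (Xᴴ * X).trace.re + s ^ 2 := by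
  rw [norm_sq_eq_re_inner (𝕜 := ℂ), inner_augmentedVec]
  simp [sq]

lemma re_trace_conjTranspose_mul_le (X Y : Matrix n n ℂ) :
    (Xᴴ * Y).trace.re ≤ √(Xᴴ * X).trace.re * √(Yᴴ * Y).trace.re := by
  have h := re_inner_le_norm (𝕜 := ℂ) (augmentedVec X 0) (augmentedVec Y 0)
  rw [inner_augmentedVec] at h
  rw [← Real.sqrt_sq (norm_nonneg (augmentedVec X 0)), norm_augmentedVec_sq,
    ← Real.sqrt_sq (norm_nonneg (augmentedVec Y 0)), norm_augmentedVec_sq] at h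
  simpa using h

end augmentedVec

section traceNorm
variable {n : Type*} [Fintype n] [DecidableEq n]

lemma msqrt_eq_sqrt {ρ : Matrix n n ℂ} (h : ρ.PosSemidef) : msqrt ρ = CFC.sqrt ρ := by
  rw [CFC.sqrt_eq_cfc, cfc_nnreal_eq_real _ ρ, h.1.cfc_eq, msqrt, dif_pos h, IsHermitian.cfc,
    Unitary.conjStarAlgAut_apply]
  congr with x
  rw [Real.sqrt]

lemma msqrt_posSemidef {ρ : Matrix n n ℂ} (h : ρ.PosSemidef) : (msqrt ρ).PosSemidef := by
  rw [msqrt_eq_sqrt h, ← nonneg_iff_posSemidef]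
  exact CFC.sqrt_nonneg ρ

lemma msqrt_mul_self {ρ : Matrix n n ℂ} (h : ρ.PosSemidef) : msqrt ρ * msqrt ρ = ρ := by
  rw [msqrt_eq_sqrt h]
  exact CFC.sqrt_mul_sqrt_self ρ h.nonneg

lemma re_trace_mul_unitary_le {P W : Matrix n n ℂ} (hP : P.PosSemidef)
    (hW : W ∈ unitaryGroup n ℂ) : (P * W).trace.re ≤ P.trace.re := by
  set S := msqrt P
  have hS : Sᴴ = S := (msqrt_posSemidef hP).1
  have hSS : S * S = P := msqrt_mul_self hP
  have hSW : (S * W)ᴴ * (S * W) = Wᴴ * P * W := by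
    rw [conjTranspose_mul, hS, ← hSS]; noncomm_ring
  have h := re_trace_conjTranspose_mul_le S (S * W)
  have hWW : W * Wᴴ = 1 := Unitary.mul_star_self_of_mem hW
  rwa [hS, hSS, hSW, ← mul_assoc, hSS, trace_mul_cycle, hWW, one_mul,
    Real.mul_self_sqrt (Complex.nonneg_iff.mp hP.trace_nonneg).1] at h

lemma exists_unitary_mul_eq_msqrt (M : Matrix n n ℂ) :
    ∃ U ∈ unitaryGroup n ℂ, M * U = msqrt (M * Mᴴ) := by
  have hP := posSemidef_self_mul_conjTranspose M
  obtain ⟨V, hV, hVM⟩ := exists_unitary_mul_eq_of_conjTranspose_mul_self_eq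
    (A := Mᴴ) (B := msqrt (M * Mᴴ)) (by rw [(msqrt_posSemidef hP).1, msqrt_mul_self hP,
      conjTranspose_conjTranspose])
  refine ⟨Vᴴ, Unitary.star_mem hV, ?_⟩
  simpa only [conjTranspose_mul, conjTranspose_conjTranspose, (msqrt_posSemidef hP).1.eq]
    using congrArg conjTranspose hVM

lemma exists_unitary_trace_mul_eq_traceNorm (M : Matrix n n ℂ) :
    ∃ U ∈ unitaryGroup n ℂ, (M * U).trace = traceNorm M := by
  obtain ⟨U, hU, hMU⟩ := exists_unitary_mul_eq_msqrt M
  have hP := msqrt_posSemidef (posSemidef_self_mul_conjTranspose M)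
  exact ⟨U, hU, hMU ▸ Complex.eq_re_of_ofReal_le hP.trace_nonneg⟩

lemma re_trace_mul_unitary_le_traceNorm (M : Matrix n n ℂ) {Q : Matrix n n ℂ}
    (hQ : Q ∈ unitaryGroup n ℂ) : (M * Q).trace.re ≤ traceNorm M := by
  obtain ⟨U, hU, hMU⟩ := exists_unitary_mul_eq_msqrt M
  have hM : M * Q = msqrt (M * Mᴴ) * (star U * Q) := by
    rw [← hMU, mul_assoc, ← mul_assoc U, Unitary.mul_star_self_of_mem hU, one_mul]
  rw [hM]
  exact re_trace_mul_unitary_le (msqrt_posSemidef (posSemidef_self_mul_conjTranspose M))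
    (mul_mem (Unitary.star_mem hU) hQ)

lemma traceNorm_nonneg (M : Matrix n n ℂ) : 0 ≤ traceNorm M :=
  (Complex.nonneg_iff.mp
    (msqrt_posSemidef (posSemidef_self_mul_conjTranspose M)).trace_nonneg).1

lemma genFid_nonneg (ρ σ : Matrix n n ℂ) : 0 ≤ genFid ρ σ :=
  add_nonneg (traceNorm_nonneg _) (Real.sqrt_nonneg _)

end traceNorm

section purification
variable {n : Type*} [Fintype n] [DecidableEq n]

noncomputable def purification (ρ U : Matrix n n ℂ) : EuclideanSpace ℂ (n × n ⊕ Unit) :=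
  augmentedVec (msqrt ρ * U) √(1 - ρ.trace.re)

lemma norm_purification {ρ U : Matrix n n ℂ} (hρ : ρ.PosSemidef) (hρ₁ : ρ.trace.re ≤ 1)
    (hU : U ∈ unitaryGroup n ℂ) : ‖purification ρ U‖ = 1 := by
  have hUU : U * Uᴴ = 1 := Unitary.mul_star_self_of_mem hU
  have h : (msqrt ρ * U)ᴴ * (msqrt ρ * U) = Uᴴ * ρ * U := by
    rw [conjTranspose_mul, (msqrt_posSemidef hρ).1.eq, ← mul_assoc, mul_assoc Uᴴ,
      msqrt_mul_self hρ]
  rw [← pow_eq_one_iff_of_nonneg (norm_nonneg _) two_ne_zero, purification, norm_augmentedVec_sq,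
    h, trace_mul_cycle, hUU, one_mul, Real.sq_sqrt (sub_nonneg.mpr hρ₁)]
  ring

lemma inner_purification {ρ σ : Matrix n n ℂ} (hρ : ρ.PosSemidef) (hρ₁ : ρ.trace.re ≤ 1)
    (U V : Matrix n n ℂ) :
    ⟪purification ρ U, purification σ V⟫_ℂ =
      (msqrt ρ * msqrt σ * (V * Uᴴ)).trace + √((1 - ρ.trace.re) * (1 - σ.trace.re)) := by
  rw [purification, purification, inner_augmentedVec, ← Real.sqrt_mul (sub_nonneg.mpr hρ₁),
    conjTranspose_mul, (msqrt_posSemidef hρ).1.eq, mul_assoc, trace_mul_comm, ← mul_assoc,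
    ← mul_assoc]

end purification

/-- Triangle inequality for the purified distance on sub-normalized states. -/
theorem pdist_triangle {n : Type*} [Fintype n] [DecidableEq n]
    (ρ σ τ : Matrix n n ℂ)
    (hρ : ρ.PosSemidef) (hρ1 : ρ.trace.re ≤ 1)
    (hσ : σ.PosSemidef) (hσ1 : σ.trace.re ≤ 1)
    (hτ : τ.PosSemidef) (hτ1 : τ.trace.re ≤ 1) :
    pdist ρ τ ≤ pdist ρ σ + pdist σ τ := by
  obtain ⟨U, hU, hρσ⟩ := exists_unitary_trace_mul_eq_traceNorm (msqrt ρ * msqrt σ)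
  obtain ⟨V, hV, hστ⟩ := exists_unitary_trace_mul_eq_traceNorm (msqrt σ * msqrt τ)
  have hxy : ⟪purification ρ Uᴴ, purification σ 1⟫_ℂ = genFid ρ σ := by
    rw [inner_purification hρ hρ1, one_mul, conjTranspose_conjTranspose, hρσ, genFid, fidelity,
      Complex.ofReal_add]
  have hyz : ⟪purification σ 1, purification τ V⟫_ℂ = genFid σ τ := by
    rw [inner_purification hσ hσ1, conjTranspose_one, mul_one, hστ, genFid, fidelity,
      Complex.ofReal_add]
  have hxz : (⟪purification ρ Uᴴ, purification τ V⟫_ℂ).re ≤ genFid ρ τ := by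
    rw [inner_purification hρ hρ1, conjTranspose_conjTranspose, Complex.add_re,
      Complex.ofReal_re, genFid, fidelity]
    gcongr
    exact re_trace_mul_unitary_le_traceNorm _ (mul_mem hV hU)
  exact sqrt_one_sub_sq_le_of_inner_eq (norm_purification hρ hρ1 (Unitary.star_mem hU))
    (norm_purification hσ hσ1 (one_mem _)) (norm_purification hτ hτ1 hV) hxy hyz
    (genFid_nonneg ρ σ) (genFid_nonneg σ τ) hxz
end
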